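/- arXiv:1910.09213 — 3 statements merged into one kernel-verified Lean document; each statement's English description precedes it below -/
import Mathlib

section
/- A probability measure μ on I = [0,1] ∪ {∞} solves the RDE Y ≐ χ[τ,κ](Y₁,Y₂) (with τ uniform on [0,1], κ uniform on {1,2}, Y₁,Y₂ i.i.d. copies of Y, all independent) if and only if ∫_{[0,t]} s dμ(s) = μ([0,t])² for all t ∈ [0,1]. -/
open MeasureTheory Set
open scoped ENNReal

/-- χ[τ,κ](x,y) on I = [0,1] ∪ {∞} ⊆ ℝ≥0∞, with κ encoded as Bool (false ↔ 1, true ↔ 2). -/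
noncomputable def chiMap (t : ℝ) (k : Bool) (x y : ℝ≥0∞) : ℝ≥0∞ :=
  if k then min x y else (if ENNReal.ofReal t < x then x else ⊤)

/-- The uniform distribution on {1,2}, encoded as a measure on Bool. -/
noncomputable def unifBool : Measure Bool :=
  (2:ℝ≥0∞)⁻¹ • Measure.dirac true + (2:ℝ≥0∞)⁻¹ • Measure.dirac false

/-!
Fix `a ∈ [0,1]` and put `F = μ[0,a]`, `L = ∫_{[0,a]} s dμ`. Under `χ[τ,2]` the output is `≤ a`
iff one of the two inputs is, which has probability `1 - (1 - F)²`. Under `χ[τ,1]` it is `≤ a`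
iff `Y₁ ∈ (τ,a]`, and averaging over `τ` gives, by Tonelli, `∫_{[0,a]} min s 1 dμ = L`. Hence
the law of the right-hand side gives `[0,a]` the mass `F - F²/2 + L/2`, which equals `F` iff
`L = F²`. Laws on `I` are determined by these masses, and for `a > 1` they reduce to `a = 1`
because `μ` puts no mass on `(1,∞)`.
-/

lemma measure_prod_min_le_add_measure_Ioi_mul {α : Type*} [LinearOrder α] [TopologicalSpace α]
    [ClosedIicTopology α] [MeasurableSpace α] [OpensMeasurableSpace α]
    (μ ν : Measure α) [IsProbabilityMeasure μ] [IsProbabilityMeasure ν] (a : α) :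
    (μ.prod ν) {q | min q.1 q.2 ≤ a} + μ (Ioi a) * ν (Ioi a) = 1 := by
  have hcompl : {q : α × α | min q.1 q.2 ≤ a} = (Ioi a ×ˢ Ioi a)ᶜ := by
    ext q
    simp only [mem_ofPred_eq, mem_compl_iff, mem_prod, mem_Ioi, not_and_or, not_lt, min_le_iff]
  rw [hcompl, ← Measure.prod_prod, add_comm, measure_add_measure_compl
    (measurableSet_Ioi.prod measurableSet_Ioi), measure_univ]

lemma volume_restrict_Icc_ofReal_lt (s : ℝ≥0∞) :
    volume.restrict (Icc (0 : ℝ) 1) {t | ENNReal.ofReal t < s} = min s 1 := by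
  rcases eq_or_ne s ⊤ with rfl | hs
  · simp [Real.volume_Icc]
  have hset : {t : ℝ | ENNReal.ofReal t < s} ∩ Ico 0 1 = Ico 0 (min 1 s.toReal) := by
    rw [← Ico_inter_Iio, inter_comm]
    ext t
    simp only [mem_inter_iff, mem_Ico, mem_ofPred_eq, mem_Iio, and_congr_right_iff]
    exact fun ht => ENNReal.ofReal_lt_iff_lt_toReal ht.1 hs
  rw [Measure.restrict_congr_set Ico_ae_eq_Icc.symm,
    Measure.restrict_apply (measurableSet_lt ENNReal.measurable_ofReal measurable_const), hset,
    Real.volume_Ico, sub_zero, ENNReal.ofReal_min, ENNReal.ofReal_one, ENNReal.ofReal_toReal hs,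
    min_comm]

lemma lintegral_measure_Ioc_ofReal (μ : Measure ℝ≥0∞) [SFinite μ] (a : ℝ≥0∞) :
    ∫⁻ t in Icc (0 : ℝ) 1, μ (Ioc (ENNReal.ofReal t) a) = ∫⁻ s in Iic a, min s 1 ∂μ := by
  let S : Set (ℝ × ℝ≥0∞) := {p | ENNReal.ofReal p.1 < p.2}
  have hS : MeasurableSet S :=
    measurableSet_lt (ENNReal.measurable_ofReal.comp measurable_fst) measurable_snd
  calc ∫⁻ t in Icc (0 : ℝ) 1, μ (Ioc (ENNReal.ofReal t) a)
      = ∫⁻ t in Icc (0 : ℝ) 1, ∫⁻ s in Iic a, S.indicator 1 (t, s) ∂μ := by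
        refine lintegral_congr fun t => ?_
        rw [← Ioi_inter_Iic, ← Measure.restrict_apply measurableSet_Ioi,
          ← lintegral_indicator_one measurableSet_Ioi]
        rfl
    _ = ∫⁻ s in Iic a, (∫⁻ t in Icc (0 : ℝ) 1, S.indicator 1 (t, s)) ∂μ :=
        lintegral_lintegral_swap (f := fun t s => S.indicator 1 (t, s))
          (measurable_one.indicator hS).aemeasurable
    _ = ∫⁻ s in Iic a, min s 1 ∂μ := by
        refine lintegral_congr fun s => ?_
        rw [← volume_restrict_Icc_ofReal_lt,
          ← lintegral_indicator_one (measurableSet_lt ENNReal.measurable_ofReal measurable_const)]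
        rfl

lemma setLIntegral_Iic_id_ne_top (μ : Measure ℝ≥0∞) [IsFiniteMeasure μ] {a : ℝ≥0∞} (ha : a ≠ ⊤) :
    ∫⁻ s in Iic a, s ∂μ ≠ ⊤ := by
  refine ne_top_of_le_ne_top (ENNReal.mul_ne_top ha (measure_ne_top μ (Iic a))) ?_
  rw [← setLIntegral_const]
  exact setLIntegral_mono measurable_const fun s hs => hs

lemma inv_two_mul_add_eq_iff {F G M L : ℝ≥0∞} (hFG : F + G = 1) (hMG : M + G * G = 1)
    (hL : L ≠ ⊤) : 2⁻¹ * M + 2⁻¹ * L = F ↔ L = F ^ 2 := by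
  have hF : F ≠ ⊤ := ne_top_of_le_ne_top ENNReal.one_ne_top (hFG ▸ le_self_add)
  have hG : G ≠ ⊤ := ne_top_of_le_ne_top ENNReal.one_ne_top (hFG ▸ le_add_self)
  have hM : M ≠ ⊤ := ne_top_of_le_ne_top ENNReal.one_ne_top (hMG ▸ le_self_add)
  have hFG' := congrArg ENNReal.toReal hFG
  have hMG' := congrArg ENNReal.toReal hMG
  rw [ENNReal.toReal_add hF hG, ENNReal.toReal_one] at hFG'
  rw [ENNReal.toReal_add hM (by finiteness), ENNReal.toReal_mul, ENNReal.toReal_one] at hMG'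
  rw [← ENNReal.toReal_eq_toReal_iff' (by finiteness) hF,
    ← ENNReal.toReal_eq_toReal_iff' hL (by finiteness),
    ENNReal.toReal_add (by finiteness) (by finiteness), ENNReal.toReal_mul, ENNReal.toReal_mul,
    ENNReal.toReal_inv, ENNReal.toReal_ofNat, ENNReal.toReal_pow]
  constructor <;> intro h
  · linear_combination (G.toReal + 1 - F.toReal) * hFG' - hMG' + 2 * h
  · linear_combination h / 2 + hMG' / 2 - (G.toReal + 1 - F.toReal) / 2 * hFG'

lemma measurable_chiMap :
    Measurable (fun p : (ℝ × Bool) × ℝ≥0∞ × ℝ≥0∞ => chiMap p.1.1 p.1.2 p.2.1 p.2.2) := by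
  unfold chiMap
  refine Measurable.ite (measurable_fst.snd (measurableSet_singleton true))
    (measurable_snd.fst.min measurable_snd.snd)
    (Measurable.ite ?_ measurable_snd.fst measurable_const)
  exact measurableSet_lt (ENNReal.measurable_ofReal.comp measurable_fst.fst) measurable_snd.fst

instance : IsProbabilityMeasure unifBool :=
  ⟨by simp [unifBool, ENNReal.inv_two_add_inv_two]⟩

lemma lintegral_unifBool (f : Bool → ℝ≥0∞) :
    ∫⁻ k, f k ∂unifBool = 2⁻¹ * f true + 2⁻¹ * f false := by
  simp [unifBool, lintegral_add_measure, lintegral_smul_measure]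

instance : IsProbabilityMeasure (volume.restrict (Icc (0:ℝ) 1)) :=
  ⟨by simp [Real.volume_Icc]⟩

noncomputable def chiLaw (μ : Measure ℝ≥0∞) : Measure ℝ≥0∞ :=
  Measure.map (fun p : (ℝ × Bool) × ℝ≥0∞ × ℝ≥0∞ => chiMap p.1.1 p.1.2 p.2.1 p.2.2)
    (((volume.restrict (Icc (0:ℝ) 1)).prod unifBool).prod (μ.prod μ))

instance (μ : Measure ℝ≥0∞) [IsProbabilityMeasure μ] : IsProbabilityMeasure (chiLaw μ) :=
  Measure.isProbabilityMeasure_map measurable_chiMap.aemeasurable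

lemma chiMap_true_le_iff (t : ℝ) (x y a : ℝ≥0∞) : chiMap t true x y ≤ a ↔ min x y ≤ a := by
  simp [chiMap]

lemma chiMap_false_le_iff (t : ℝ) (x y : ℝ≥0∞) {a : ℝ≥0∞} (ha : a ≠ ⊤) :
    chiMap t false x y ≤ a ↔ x ∈ Ioc (ENNReal.ofReal t) a := by
  by_cases h : ENNReal.ofReal t < x <;> simp [chiMap, h, ha]

lemma chiLaw_Iic (μ : Measure ℝ≥0∞) [IsProbabilityMeasure μ] {a : ℝ≥0∞} (ha : a ≠ ⊤) :
    chiLaw μ (Iic a) = 2⁻¹ * (μ.prod μ) {q | min q.1 q.2 ≤ a}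
      + 2⁻¹ * ∫⁻ t in Icc (0:ℝ) 1, μ (Ioc (ENNReal.ofReal t) a) := by
  have hpre := measurable_chiMap (measurableSet_Iic (a := a))
  have hslice (t : ℝ) (k : Bool) : (μ.prod μ) {q | chiMap t k q.1 q.2 ≤ a}
      = if k then (μ.prod μ) {q | min q.1 q.2 ≤ a} else μ (Ioc (ENNReal.ofReal t) a) := by
    cases k
    · simp only [chiMap_false_le_iff _ _ _ ha]
      rw [if_neg Bool.false_ne_true]
      change (μ.prod μ) (Prod.fst ⁻¹' Ioc (ENNReal.ofReal t) a) = _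
      rw [← Measure.fst_apply measurableSet_Ioc, Measure.fst_prod]
    · simp only [chiMap_true_le_iff, if_true]
  have hanti : Antitone fun t : ℝ => μ (Ioc (ENNReal.ofReal t) a) := fun t₁ t₂ h =>
    measure_mono (Ioc_subset_Ioc_left (ENNReal.ofReal_le_ofReal h))
  rw [chiLaw, Measure.map_apply measurable_chiMap measurableSet_Iic, Measure.prod_apply hpre,
    lintegral_prod _ (measurable_measure_prodMk_left hpre).aemeasurable]
  calc ∫⁻ t in Icc (0:ℝ) 1, ∫⁻ k, (μ.prod μ) {q | chiMap t k q.1 q.2 ≤ a} ∂unifBool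
      = ∫⁻ t in Icc (0:ℝ) 1, (2⁻¹ * (μ.prod μ) {q | min q.1 q.2 ≤ a}
          + 2⁻¹ * μ (Ioc (ENNReal.ofReal t) a)) := by
        simp only [lintegral_unifBool, hslice, if_true, Bool.false_eq_true, if_false]
    _ = _ := by
        rw [lintegral_add_left measurable_const, lintegral_const_mul _ hanti.measurable,
          setLIntegral_const]
        simp [Real.volume_Icc]

lemma setLIntegral_min_one_Iic (μ : Measure ℝ≥0∞) (hμ : ∀ᵐ s ∂μ, s ≤ 1 ∨ s = ⊤) {a : ℝ≥0∞}
    (ha : a ≠ ⊤) : ∫⁻ s in Iic a, min s 1 ∂μ = ∫⁻ s in Iic a, s ∂μ := by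
  refine setLIntegral_congr_fun_ae measurableSet_Iic ?_
  filter_upwards [hμ] with s hs hsa
  rcases hs with hs | rfl
  · exact min_eq_left hs
  · exact absurd (top_le_iff.mp hsa) ha

lemma Iic_ae_eq_Iic_one {μ : Measure ℝ≥0∞} (hμ : ∀ᵐ s ∂μ, s ≤ 1 ∨ s = ⊤) {a : ℝ≥0∞}
    (h1 : 1 ≤ a) (ha : a ≠ ⊤) : (Iic a : Set ℝ≥0∞) =ᵐ[μ] Iic 1 := by
  rw [Filter.eventuallyEq_set]
  filter_upwards [hμ] with s hs
  rcases hs with hs | rfl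
  · simp [hs, hs.trans h1]
  · simp [ha]

lemma chiLaw_Iic_eq_iff (μ : Measure ℝ≥0∞) [IsProbabilityMeasure μ]
    (hμ : ∀ᵐ s ∂μ, s ≤ 1 ∨ s = ⊤) {a : ℝ≥0∞} (ha : a ≠ ⊤) :
    chiLaw μ (Iic a) = μ (Iic a) ↔ ∫⁻ s in Iic a, s ∂μ = μ (Iic a) ^ 2 := by
  rw [chiLaw_Iic μ ha, lintegral_measure_Ioc_ofReal, setLIntegral_min_one_Iic μ hμ ha]
  have hF : μ (Iic a) + μ (Ioi a) = 1 := by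
    rw [← compl_Iic, prob_add_prob_compl measurableSet_Iic]
  exact inv_two_mul_add_eq_iff hF (measure_prod_min_le_add_measure_Ioi_mul μ μ a)
    (setLIntegral_Iic_id_ne_top μ ha)

/-- A probability measure μ on I = [0,1] ∪ {∞} solves the RDE Y ≐ χ[τ,κ](Y₁,Y₂)
(τ uniform on [0,1], κ uniform on {1,2}, Y₁, Y₂ i.i.d. ~ μ, all independent)
if and only if ∫_{[0,t]} s dμ(s) = μ([0,t])² for all t ∈ [0,1]. -/
theorem stmt2 (μ : Measure ℝ≥0∞) [IsProbabilityMeasure μ]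
    (hconc : μ {x : ℝ≥0∞ | 1 < x ∧ x ≠ ⊤} = 0) :
    (Measure.map (fun p : (ℝ × Bool) × ℝ≥0∞ × ℝ≥0∞ => chiMap p.1.1 p.1.2 p.2.1 p.2.2)
        (((volume.restrict (Set.Icc (0:ℝ) 1)).prod unifBool).prod (μ.prod μ)) = μ)
    ↔ ∀ t ∈ Set.Icc (0:ℝ) 1,
        ∫⁻ s in Set.Icc 0 (ENNReal.ofReal t), s ∂μ
          = (μ (Set.Icc 0 (ENNReal.ofReal t)))^2 := by
  have hμ : ∀ᵐ s ∂μ, s ≤ 1 ∨ s = ⊤ :=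
    measure_mono_null (fun s hs => by simpa [not_or, not_le] using hs) hconc
  have hIcc (b : ℝ≥0∞) : Icc 0 b = Iic b := by ext; simp
  change chiLaw μ = μ ↔ _
  simp only [hIcc]
  constructor
  · intro h t _
    exact (chiLaw_Iic_eq_iff μ hμ ENNReal.ofReal_ne_top).1 (by rw [h])
  · intro h
    refine Measure.ext_of_Iic _ _ fun a => ?_
    rcases eq_or_ne a ⊤ with rfl | ha
    · simp
    refine (chiLaw_Iic_eq_iff μ hμ ha).2 ?_
    rcases le_total a 1 with ha1 | ha1
    · simpa [ENNReal.ofReal_toReal ha] using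
        h a.toReal ⟨ENNReal.toReal_nonneg, ENNReal.toReal_le_of_le_ofReal zero_le_one (by simpa)⟩
    · have hae := Iic_ae_eq_Iic_one hμ ha1 ha
      rw [measure_congr hae, setLIntegral_congr hae]
      simpa using h 1 ⟨zero_le_one, le_rfl⟩
end

section
/- Every solution μ of the RDE X ≐ γ[τ](X₁,X₂) (τ uniform on [0,1], X₁,X₂ i.i.d. copies of X independent of τ, γ[t](x,y) = x∧y if x∧y > t, else ∞) is concentrated on [1/2, 1] ∪ {∞}; in particular μ([0,1/2)) = 0. -/
open MeasureTheory Set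
open scoped ENNReal

/-- γ[t](x,y) on I = [0,1] ∪ {∞} ⊆ ℝ≥0∞: min x y if min x y > t, else ∞. -/
noncomputable def gammaMap (t : ℝ) (x y : ℝ≥0∞) : ℝ≥0∞ :=
  if ENNReal.ofReal t < min x y then min x y else ⊤

/-!
If `μ` solves the RDE and `c < ∞`, then `γ[τ](X₁, X₂) ≤ c` forces `τ < c` and `min X₁ X₂ ≤ c`, so
`μ [0, c] ≤ c · 2 μ [0, c]` by the union bound. For `c < 1/2` the factor `2c` is below `1`,
hence `μ [0, c] = 0`; this is the first-moment version of the fact that the critical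
Binomial(2, 1/2) Galton–Watson tree dies out. Exhausting `[0, 1/2)` by such intervals gives the claim.
-/

theorem measure_Iio_eq_zero_of_forall_lt {α : Type*} [ConditionallyCompleteLinearOrder α]
    [TopologicalSpace α] [OrderTopology α] [DenselyOrdered α] [FirstCountableTopology α]
    [MeasurableSpace α] (μ : Measure α) {a : α} (h : ∀ b < a, μ (Iic b) = 0) :
    μ (Iio a) = 0 := by
  rcases (Iio a).eq_empty_or_nonempty with hempty | ⟨y, hy⟩
  · simp [hempty]
  obtain ⟨u, -, hu, hlim⟩ := exists_seq_strictMono_tendsto' hy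
  rw [← iUnion_Iic_eq_Iio_of_lt_of_tendsto (fun n => (hu n).2) hlim]
  exact measure_iUnion_null fun n => h _ (hu n).2

theorem ENNReal.eq_zero_of_le_mul_of_lt_one {a b : ℝ≥0∞} (ha : a ≠ ⊤) (hb : b < 1)
    (h : a ≤ b * a) : a = 0 := by
  by_contra ha0
  exact (h.trans_lt (ENNReal.mul_lt_mul_left ha0 ha hb)).ne (one_mul a).symm

theorem volume_restrict_Icc_setOf_ofReal_lt_le (c : ℝ≥0∞) :
    volume.restrict (Icc (0 : ℝ) 1) {t | ENNReal.ofReal t < c} ≤ c := by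
  rcases eq_or_ne c ⊤ with rfl | hc
  · exact le_top
  calc volume.restrict (Icc (0 : ℝ) 1) {t | ENNReal.ofReal t < c}
      ≤ volume (Ico 0 c.toReal) := by
        rw [Measure.restrict_apply' measurableSet_Icc]
        exact measure_mono fun t ht =>
          ⟨ht.2.1, (ENNReal.ofReal_lt_iff_lt_toReal ht.2.1 hc).1 ht.1⟩
    _ = c := by simp [hc]

theorem measure_prod_setOf_min_le_le {α : Type*} [LinearOrder α] [MeasurableSpace α]
    (μ : Measure α) [IsProbabilityMeasure μ] (c : α) :
    μ.prod μ {p | min p.1 p.2 ≤ c} ≤ 2 * μ (Iic c) := by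
  have hunion : {p : α × α | min p.1 p.2 ≤ c} = Iic c ×ˢ univ ∪ univ ×ˢ Iic c := by
    ext p; simp
  calc μ.prod μ {p | min p.1 p.2 ≤ c}
      ≤ μ.prod μ (Iic c ×ˢ univ) + μ.prod μ (univ ×ˢ Iic c) := hunion ▸ measure_union_le _ _
    _ = 2 * μ (Iic c) := by simp [Measure.prod_prod, two_mul]

theorem gammaMap_le_iff {t : ℝ} {x y c : ℝ≥0∞} (hc : c ≠ ⊤) :
    gammaMap t x y ≤ c ↔ ENNReal.ofReal t < min x y ∧ min x y ≤ c := by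
  unfold gammaMap
  split_ifs with h <;> simp [h, hc]

theorem measurable_gammaMap :
    Measurable (fun p : ℝ × ℝ≥0∞ × ℝ≥0∞ => gammaMap p.1 p.2.1 p.2.2) :=
  Measurable.ite (measurableSet_lt (by fun_prop) (by fun_prop)) (by fun_prop) (by fun_prop)

noncomputable def gammaRDEMap (μ : Measure ℝ≥0∞) : Measure ℝ≥0∞ :=
  Measure.map (fun p : ℝ × ℝ≥0∞ × ℝ≥0∞ => gammaMap p.1 p.2.1 p.2.2)
    ((volume.restrict (Icc (0 : ℝ) 1)).prod (μ.prod μ))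

theorem gammaRDEMap_Iic_le (μ : Measure ℝ≥0∞) [IsProbabilityMeasure μ] {c : ℝ≥0∞}
    (hc : c ≠ ⊤) : gammaRDEMap μ (Iic c) ≤ c * (2 * μ (Iic c)) := by
  have hpre : (fun p : ℝ × ℝ≥0∞ × ℝ≥0∞ => gammaMap p.1 p.2.1 p.2.2) ⁻¹' Iic c ⊆
      {t | ENNReal.ofReal t < c} ×ˢ {p | min p.1 p.2 ≤ c} := by
    rintro ⟨t, x, y⟩ hp
    obtain ⟨ht, hxy⟩ := (gammaMap_le_iff hc).1 hp
    exact ⟨ht.trans_le hxy, hxy⟩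
  calc gammaRDEMap μ (Iic c)
      ≤ volume.restrict (Icc (0 : ℝ) 1) {t | ENNReal.ofReal t < c} *
          μ.prod μ {p | min p.1 p.2 ≤ c} := by
        rw [gammaRDEMap, Measure.map_apply measurable_gammaMap measurableSet_Iic,
          ← Measure.prod_prod]
        exact measure_mono hpre
    _ ≤ c * (2 * μ (Iic c)) := by
        gcongr
        · exact volume_restrict_Icc_setOf_ofReal_lt_le c
        · exact measure_prod_setOf_min_le_le μ c

theorem measure_Iic_eq_zero_of_gammaRDEMap_eq (μ : Measure ℝ≥0∞) [IsProbabilityMeasure μ]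
    (hμ : gammaRDEMap μ = μ) {c : ℝ≥0∞} (hc : c < 2⁻¹) : μ (Iic c) = 0 := by
  refine ENNReal.eq_zero_of_le_mul_of_lt_one (measure_ne_top μ _) (b := c * 2) ?_ ?_
  · exact ENNReal.mul_lt_of_lt_div (by rwa [one_div])
  · calc μ (Iic c) = gammaRDEMap μ (Iic c) := by rw [hμ]
      _ ≤ c * (2 * μ (Iic c)) := gammaRDEMap_Iic_le μ (hc.trans_le (by norm_num)).ne
      _ = c * 2 * μ (Iic c) := (mul_assoc _ _ _).symm

theorem stmt8_general (μ : Measure ℝ≥0∞) [IsProbabilityMeasure μ]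
    (hRDE : Measure.map (fun p : ℝ × ℝ≥0∞ × ℝ≥0∞ => gammaMap p.1 p.2.1 p.2.2)
      ((volume.restrict (Set.Icc (0:ℝ) 1)).prod (μ.prod μ)) = μ) :
    μ (Set.Ico 0 (ENNReal.ofReal (1/2))) = 0 := by
  rw [one_div, ENNReal.ofReal_inv_of_pos two_pos, ENNReal.ofReal_ofNat, ← bot_eq_zero, Ico_bot]
  exact measure_Iio_eq_zero_of_forall_lt μ fun c hc =>
    measure_Iic_eq_zero_of_gammaRDEMap_eq μ hRDE hc

/-- Every solution μ (a probability measure on I = [0,1] ∪ {∞}) of the RDE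
X ≐ γ[τ](X₁,X₂), with τ uniform on [0,1] and X₁, X₂ i.i.d. ~ μ independent of τ,
is concentrated on [1/2,1] ∪ {∞}; in particular μ([0,1/2)) = 0. -/
theorem stmt8 (μ : Measure ℝ≥0∞) [IsProbabilityMeasure μ]
    (hconc : μ {x : ℝ≥0∞ | 1 < x ∧ x ≠ ⊤} = 0)
    (hRDE : Measure.map (fun p : ℝ × ℝ≥0∞ × ℝ≥0∞ => gammaMap p.1 p.2.1 p.2.2)
      ((volume.restrict (Set.Icc (0:ℝ) 1)).prod (μ.prod μ)) = μ) :
    μ (Set.Ico 0 (ENNReal.ofReal (1/2))) = 0 :=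
  stmt8_general μ hRDE
end

section
/- Define h(c) = (1/(4c))·((√(1+32c) − √(1+16c))/(√(1+32c) + √(1+16c)))^{1/√(1+16c)} for c > 0. Then for each c > 0, with f_c the solution of f_c'(r) = cr/(f_c(r)−r/2), f_c(0)=1/2, the following are equivalent: (a) 2c = f_c(1)² − f_c(1)/2; (b) f_c(1) = (1 + √(1+32c))/4; (c) h(c) = 1. -/
/-!
The equation `f' = c r / (f - r/2)` is homogeneous; separating variables in `f = r v` gives the
first integral `Φ(r, y) = (y - g₊ r)^{A₊} (y - g₋ r)^{A₋}`, where `g±` are the roots of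
`g² - g/2 = c` and `A₊ + A₋ = -1`, so that `Φ(r, f r) = Φ(0, 1/2) = 2`. The solution cannot touch
the line `y = g₊ r`: there `Φ` would blow up, since `A₊ < 0`. Hence `f 1` is the point above `g₊`
where the strictly decreasing function `Φ(1, ·)` equals `2`. Condition (a) is the quadratic whose
positive root is (b), and `h(c) = Φ(1, (1 + √(1 + 32c))/4)² / 4`, which gives (b) ↔ (c).
-/

open Set

/-- The function h(c) from the right boundary condition (real power). -/
noncomputable def hAux (c : ℝ) : ℝ :=
  (1/(4*c)) * ((Real.sqrt (1 + 32*c) - Real.sqrt (1 + 16*c))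
      / (Real.sqrt (1 + 32*c) + Real.sqrt (1 + 16*c)))
    ^ (1 / Real.sqrt (1 + 16*c))

open Real Topology

/-- `Φ(r, y) = (y - g₊ r)^{A₊} (y - g₋ r)^{A₋}` with `g± = (1 ± b)/4` and `A± = -(b ∓ 1)/(2b)`;
for `b = √(1 + 16c)` the `g±` are the roots of `g² - g/2 = c`. -/
noncomputable def firstIntegral (b r y : ℝ) : ℝ :=
  (y - (1 + b) / 4 * r) ^ (-(b - 1) / (2 * b)) * (y - (1 - b) / 4 * r) ^ (-(b + 1) / (2 * b))

structure SolvesCauchyProblem (c : ℝ) (f : ℝ → ℝ) : Prop where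
  continuousOn : ContinuousOn f (Icc 0 1)
  map_zero : f 0 = 1 / 2
  hasDerivWithinAt : ∀ r ∈ Ico (0 : ℝ) 1,
    HasDerivWithinAt f (c * r / (f r - r / 2)) (Icc 0 1) r

theorem firstIntegral_zero {b y : ℝ} (hb : b ≠ 0) (hy : 0 < y) : firstIntegral b 0 y = y⁻¹ := by
  have hA : -(b - 1) / (2 * b) + -(b + 1) / (2 * b) = -1 := by field_simp; ring
  rw [firstIntegral, mul_zero, mul_zero, sub_zero, ← rpow_add hy, hA, rpow_neg_one]

theorem sub_pos_of_one_add_mul_lt {b r y : ℝ} (hb : 0 ≤ b) (hr : 0 ≤ r) (h : (1 + b) / 4 * r < y) :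
    0 < y - (1 - b) / 4 * r := by
  nlinarith

theorem firstIntegral_pos {b r y : ℝ} (hu : 0 < y - (1 + b) / 4 * r)
    (hw : 0 < y - (1 - b) / 4 * r) : 0 < firstIntegral b r y :=
  mul_pos (rpow_pos_of_pos hu _) (rpow_pos_of_pos hw _)

theorem firstIntegral_strictAntiOn {b r : ℝ} (hb : 1 < b) (hr : 0 ≤ r) :
    StrictAntiOn (firstIntegral b r) (Ioi ((1 + b) / 4 * r)) := by
  intro y (hy : (1 + b) / 4 * r < y) z _ hyz
  have hAp : -(b - 1) / (2 * b) < 0 := div_neg_of_neg_of_pos (by linarith) (by linarith)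
  have hAm : -(b + 1) / (2 * b) < 0 := div_neg_of_neg_of_pos (by linarith) (by linarith)
  have hw := sub_pos_of_one_add_mul_lt (by linarith) hr hy
  exact mul_lt_mul'' (rpow_lt_rpow_of_neg (by linarith) (by linarith) hAp)
    (rpow_lt_rpow_of_neg hw (by linarith) hAm) (rpow_nonneg (by linarith) _)
    (rpow_nonneg (by linarith) _)

theorem hasDerivWithinAt_firstIntegral_comp {c b e x : ℝ} {f : ℝ → ℝ} {s : Set ℝ} (hb : b ≠ 0)
    (hb2 : b ^ 2 = 1 + 16 * c) (hf : HasDerivWithinAt f e s x) (he : e * (f x - x / 2) = c * x)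
    (hu : 0 < f x - (1 + b) / 4 * x) (hw : 0 < f x - (1 - b) / 4 * x) :
    HasDerivWithinAt (fun r => firstIntegral b r (f r)) 0 s x := by
  have hlin (g : ℝ) : HasDerivWithinAt (fun r => f r - g * r) (e - g) s x :=
    (hf.sub ((hasDerivWithinAt_id x s).const_mul g)).congr_deriv (by ring)
  -- `Φ'/Φ = A₊ (e - g₊)/(f x - g₊ x) + A₋ (e - g₋)/(f x - g₋ x)`, whose numerator is `-1/(8b)`
  -- times the left-hand side below.
  have hbracket : (b - 1) * (4 * e - (1 + b)) * (f x - (1 - b) / 4 * x)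
      + (b + 1) * (4 * e - (1 - b)) * (f x - (1 + b) / 4 * x) = 0 := by
    linear_combination 8 * b * he - b * x / 2 * hb2
  refine (((hlin _).rpow_const (Or.inl hu.ne')).mul
    ((hlin _).rpow_const (Or.inl hw.ne'))).congr_deriv ?_
  rw [rpow_sub_one hu.ne', rpow_sub_one hw.ne']
  generalize (f x - (1 + b) / 4 * x) ^ (-(b - 1) / (2 * b)) = P
  generalize (f x - (1 - b) / 4 * x) ^ (-(b + 1) / (2 * b)) = Q
  generalize f x - (1 + b) / 4 * x = u at hu hbracket ⊢
  generalize f x - (1 - b) / 4 * x = w at hw hbracket ⊢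
  field_simp
  linear_combination (-P * Q) * hbracket

theorem SolvesCauchyProblem.firstIntegral_eq_two {c b t : ℝ} {f : ℝ → ℝ}
    (hsol : SolvesCauchyProblem c f) (hb : 1 < b) (hb2 : b ^ 2 = 1 + 16 * c)
    (ht : t ∈ Icc (0 : ℝ) 1) (hpos : ∀ s ∈ Icc 0 t, (1 + b) / 4 * s < f s) :
    firstIntegral b t (f t) = 2 := by
  have hu : ∀ s ∈ Icc 0 t, 0 < f s - (1 + b) / 4 * s := fun s hs => sub_pos.2 (hpos s hs)
  have hw : ∀ s ∈ Icc 0 t, 0 < f s - (1 - b) / 4 * s :=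
    fun s hs => sub_pos_of_one_add_mul_lt (by linarith) hs.1 (hpos s hs)
  have hsub : Icc 0 t ⊆ Icc (0 : ℝ) 1 := Icc_subset_Icc_right ht.2
  have hcont : ContinuousOn (fun r => firstIntegral b r (f r)) (Icc 0 t) := by
    have hf := hsol.continuousOn.mono hsub
    exact ((hf.sub (by fun_prop)).rpow_const fun s hs => Or.inl (hu s hs).ne').mul
      ((hf.sub (by fun_prop)).rpow_const fun s hs => Or.inl (hw s hs).ne')
  have hderiv :
      ∀ x ∈ Ico 0 t, HasDerivWithinAt (fun r => firstIntegral b r (f r)) 0 (Ici x) x := by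
    intro x hx
    have hx1 : x ∈ Ico (0 : ℝ) 1 := ⟨hx.1, hx.2.trans_le ht.2⟩
    have hmem : Icc (0 : ℝ) 1 ∈ 𝓝[Ici x] x :=
      mem_nhdsWithin.2 ⟨Iio 1, isOpen_Iio, hx1.2, fun y hy => ⟨hx.1.trans hy.2, hy.1.le⟩⟩
    have hxt : x ∈ Icc 0 t := Ico_subset_Icc_self hx
    have hhalf : 0 < f x - x / 2 := by nlinarith [hu x hxt, hx.1]
    exact hasDerivWithinAt_firstIntegral_comp (by linarith) hb2
      ((hsol.hasDerivWithinAt x hx1).mono_of_mem_nhdsWithin hmem)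
      (div_mul_cancel₀ _ hhalf.ne') (hu x hxt) (hw x hxt)
  rw [constant_of_has_deriv_right_zero hcont hderiv t (right_mem_Icc.2 ht.1),
    hsol.map_zero, firstIntegral_zero (by linarith) (by norm_num)]
  norm_num

theorem exists_first_zero {u : ℝ → ℝ} {a b : ℝ} (hu : ContinuousOn u (Icc a b)) (ha : 0 < u a)
    (hneg : ∃ r ∈ Icc a b, u r ≤ 0) : ∃ t ∈ Ioc a b, u t = 0 ∧ ∀ s ∈ Ico a t, 0 < u s := by
  obtain ⟨r, hr, hur⟩ := hneg
  set S := Icc a b ∩ u ⁻¹' Iic 0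
  have hbdd : BddBelow S := ⟨a, fun s hs => hs.1.1⟩
  have htS : sInf S ∈ S :=
    (hu.preimage_isClosed_of_isClosed isClosed_Icc isClosed_Iic).csInf_mem ⟨r, hr, hur⟩ hbdd
  set t := sInf S
  have hpos : ∀ s ∈ Ico a t, 0 < u s := fun s hs => not_le.1 fun h =>
    hs.2.not_ge (csInf_le hbdd ⟨⟨hs.1, hs.2.le.trans htS.1.2⟩, h⟩)
  have hat : a < t := htS.1.1.lt_of_ne fun h => (h ▸ ha).not_ge htS.2
  refine ⟨t, ⟨hat, htS.1.2⟩, le_antisymm htS.2 ?_, hpos⟩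
  refine ContinuousWithinAt.closure_le (s := Ico a t) ?_ continuousWithinAt_const
    ((hu t htS.1).mono (Ico_subset_Icc_self.trans (Icc_subset_Icc_right htS.1.2)))
    fun s hs => (hpos s hs).le
  rw [closure_Ico hat.ne]
  exact right_mem_Icc.2 hat.le

theorem eq_rpow_of_rpow_mul_rpow_eq {u w A B k : ℝ} (hu : 0 < u) (hw : 0 < w) (hA : A ≠ 0)
    (h : u ^ A * w ^ B = k) : u = (k * w ^ (-B)) ^ A⁻¹ := by
  rw [← h, mul_assoc, ← rpow_add hw, add_neg_cancel, rpow_zero, mul_one, ← rpow_mul hu.le,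
    mul_inv_cancel₀ hA, rpow_one]

-- Since `A₊ ≠ 0`, `Φ = k` expresses `y - g₊ r` as a continuous function of `y - g₋ r`,
-- positive wherever `y - g₋ r` is.
theorem sub_pos_of_firstIntegral_eq {b k t : ℝ} {f : ℝ → ℝ} {S : Set ℝ} (hb : 1 < b) (hk : 0 < k)
    (htS : t ∈ closure S) (hf : ContinuousWithinAt f S t)
    (hΦ : ∀ s ∈ S, firstIntegral b s (f s) = k) (hu : ∀ s ∈ S, 0 < f s - (1 + b) / 4 * s)
    (hw : ∀ s ∈ S, 0 < f s - (1 - b) / 4 * s) (hwt : 0 < f t - (1 - b) / 4 * t) :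
    0 < f t - (1 + b) / 4 * t := by
  set G : ℝ → ℝ := fun s => (k * (f s - (1 - b) / 4 * s) ^ (-(-(b + 1) / (2 * b))))
    ^ (-(b - 1) / (2 * b))⁻¹
  have hEq : ∀ s ∈ S, f s - (1 + b) / 4 * s = G s := fun s hs =>
    eq_rpow_of_rpow_mul_rpow_eq (hu s hs) (hw s hs) (div_ne_zero (by linarith) (by linarith))
      (hΦ s hs)
  have hbase : 0 < k * (f t - (1 - b) / 4 * t) ^ (-(-(b + 1) / (2 * b))) :=
    mul_pos hk (rpow_pos_of_pos hwt _)
  have hucont : ContinuousWithinAt (fun s => f s - (1 + b) / 4 * s) S t := hf.sub (by fun_prop)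
  have hG : ContinuousWithinAt G S t :=
    (continuousWithinAt_const.mul ((hf.sub (by fun_prop)).rpow_const (Or.inl hwt.ne'))).rpow_const
      (Or.inl hbase.ne')
  have hGt : f t - (1 + b) / 4 * t = G t :=
    le_antisymm (hucont.closure_le htS hG fun s hs => (hEq s hs).le)
      (hG.closure_le htS hucont fun s hs => (hEq s hs).ge)
  exact hGt ▸ rpow_pos_of_pos hbase _

theorem SolvesCauchyProblem.mul_lt_apply {c b : ℝ} {f : ℝ → ℝ} (hsol : SolvesCauchyProblem c f)
    (hb : 1 < b) (hb2 : b ^ 2 = 1 + 16 * c) : ∀ r ∈ Icc (0 : ℝ) 1, (1 + b) / 4 * r < f r := by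
  by_contra! hneg
  obtain ⟨t, ⟨ht0, ht1⟩, hut, hpos⟩ := exists_first_zero (u := fun r => f r - (1 + b) / 4 * r)
    (hsol.continuousOn.sub (by fun_prop)) (by simp [hsol.map_zero])
    (by obtain ⟨r, hr, h⟩ := hneg; exact ⟨r, hr, by simpa using h⟩)
  have hw : ∀ s ∈ Icc 0 t, 0 < f s - (1 - b) / 4 * s := by
    intro s hs
    rcases hs.2.lt_or_eq with hst | rfl
    · exact sub_pos_of_one_add_mul_lt (by linarith) hs.1 (sub_pos.1 (hpos s ⟨hs.1, hst⟩))
    · nlinarith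
  have hcl : t ∈ closure (Ico 0 t) := by
    rw [closure_Ico ht0.ne]
    exact right_mem_Icc.2 ht0.le
  have hf : ContinuousWithinAt f (Ico 0 t) t :=
    (hsol.continuousOn t ⟨ht0.le, ht1⟩).mono
      (Ico_subset_Icc_self.trans (Icc_subset_Icc_right ht1))
  have hΦ : ∀ s ∈ Ico 0 t, firstIntegral b s (f s) = 2 := fun s hs =>
    hsol.firstIntegral_eq_two hb hb2 ⟨hs.1, hs.2.le.trans ht1⟩
      fun σ hσ => sub_pos.1 (hpos σ ⟨hσ.1, hσ.2.trans_lt hs.2⟩)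
  have := sub_pos_of_firstIntegral_eq hb two_pos hcl hf hΦ hpos
    (fun s hs => hw s (Ico_subset_Icc_self hs)) (hw t (right_mem_Icc.2 ht0.le))
  exact this.ne' hut

theorem firstIntegral_sq {b r y : ℝ} (hb : b ≠ 0) (hu : 0 < y - (1 + b) / 4 * r)
    (hw : 0 < y - (1 - b) / 4 * r) :
    firstIntegral b r y ^ 2 = ((y - (1 + b) / 4 * r) * (y - (1 - b) / 4 * r))⁻¹
      * ((y - (1 + b) / 4 * r) / (y - (1 - b) / 4 * r)) ^ (1 / b) := by
  have hinv : ((y - (1 + b) / 4 * r) * (y - (1 - b) / 4 * r))⁻¹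
      = exp (-(log (y - (1 + b) / 4 * r) + log (y - (1 - b) / 4 * r))) := by
    rw [exp_neg, ← log_mul hu.ne' hw.ne', exp_log (mul_pos hu hw)]
  rw [hinv, firstIntegral, rpow_def_of_pos hu, rpow_def_of_pos hw, rpow_def_of_pos (div_pos hu hw),
    log_div hu.ne' hw.ne', ← exp_add, sq, ← exp_add, ← exp_add]
  congr 1
  field_simp
  ring

theorem hAux_eq_firstIntegral_sq {c : ℝ} (hc : 0 < c) :
    hAux c = firstIntegral √(1 + 16 * c) 1 ((1 + √(1 + 32 * c)) / 4) ^ 2 / 4 := by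
  rw [hAux]
  set a := √(1 + 32 * c)
  set b := √(1 + 16 * c)
  have ha2 : a ^ 2 = 1 + 32 * c := sq_sqrt (by linarith)
  have hb2 : b ^ 2 = 1 + 16 * c := sq_sqrt (by linarith)
  have hb : 0 < b := sqrt_pos.2 (by linarith)
  have hba : b < a := sqrt_lt_sqrt (by linarith) (by linarith)
  have hp : (1 + a) / 4 - (1 + b) / 4 * 1 = (a - b) / 4 := by ring
  have hq : (1 + a) / 4 - (1 - b) / 4 * 1 = (a + b) / 4 := by ring
  rw [firstIntegral_sq hb.ne' (by linarith) (by linarith), hp, hq]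
  have hpq : (a - b) / 4 * ((a + b) / 4) = c := by linear_combination (ha2 - hb2) / 16
  have hdiv : (a - b) / 4 / ((a + b) / 4) = (a - b) / (a + b) := by field_simp
  rw [hpq, hdiv]
  field_simp

theorem two_mul_eq_sq_sub_half_iff {c y : ℝ} (hc : 0 ≤ c) (hy : 0 < y) :
    2 * c = y ^ 2 - y / 2 ↔ y = (1 + √(1 + 32 * c)) / 4 := by
  set a := √(1 + 32 * c)
  have ha2 : a ^ 2 = 1 + 32 * c := sq_sqrt (by linarith)
  have ha : 1 ≤ a := one_le_sqrt.2 (by linarith)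
  have hfac : y ^ 2 - y / 2 - 2 * c = (y - (1 + a) / 4) * (y - (1 - a) / 4) := by
    linear_combination ha2 / 16
  rw [eq_comm, ← sub_eq_zero, hfac, mul_eq_zero, sub_eq_zero, or_iff_left (by linarith)]

/-- For c > 0 and f the solution of f'(r) = cr/(f(r)−r/2), f(0) = 1/2,
the following are equivalent: (a) 2c = f(1)² − f(1)/2;
(b) f(1) = (1 + √(1+32c))/4; (c) h(c) = 1. -/
theorem stmt16 (c : ℝ) (hc : 0 < c) (f : ℝ → ℝ)
    (hf : ContinuousOn f (Set.Icc 0 1)) (hf0 : f 0 = 1/2)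
    (hder : ∀ r ∈ Set.Ico (0:ℝ) 1,
      HasDerivWithinAt f (c * r / (f r - r/2)) (Set.Icc 0 1) r) :
    ((2*c = (f 1)^2 - (f 1)/2) ↔ (f 1 = (1 + Real.sqrt (1 + 32*c))/4)) ∧
    ((f 1 = (1 + Real.sqrt (1 + 32*c))/4) ↔ hAux c = 1) := by
  have hsol : SolvesCauchyProblem c f := ⟨hf, hf0, hder⟩
  set b := √(1 + 16 * c)
  have hb : 1 < b := lt_sqrt_of_sq_lt (by linarith)
  have hb2 : b ^ 2 = 1 + 16 * c := sq_sqrt (by linarith)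
  have hf1 : (1 + b) / 4 < f 1 := by
    simpa using hsol.mul_lt_apply hb hb2 1 (right_mem_Icc.2 zero_le_one)
  have hΦ : firstIntegral b 1 (f 1) = 2 :=
    hsol.firstIntegral_eq_two hb hb2 (right_mem_Icc.2 zero_le_one) (hsol.mul_lt_apply hb hb2)
  refine ⟨two_mul_eq_sq_sub_half_iff hc.le (by linarith), ?_⟩
  have hba : b < √(1 + 32 * c) := sqrt_lt_sqrt (by linarith) (by linarith)
  have hroot : (1 + b) / 4 * 1 < (1 + √(1 + 32 * c)) / 4 := by linarith
  have hpos : 0 < firstIntegral b 1 ((1 + √(1 + 32 * c)) / 4) :=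
    firstIntegral_pos (by linarith) (by linarith)
  rw [hAux_eq_firstIntegral_sq hc]
  constructor
  · intro h
    rw [← h, hΦ]
    norm_num
  · intro h
    have h2 : firstIntegral b 1 ((1 + √(1 + 32 * c)) / 4) = 2 := by nlinarith
    exact (firstIntegral_strictAntiOn hb zero_le_one).injOn (by simpa using hf1) hroot
      (hΦ.trans h2.symm)
end
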